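/- arXiv:1509.02251 — 4 statements merged into one kernel-verified Lean document; each statement's English description precedes it below -/
import Mathlib

section
/- Let g be the Green function of a transient reversible random walk on a locally finite connected weighted graph with sup_x g(x,x) = g₀ < ∞. Then for every starting point x, P_x-almost surely cap({Z₀, Z₁, …, Z_k}) → ∞ as k → ∞. -/
open MeasureTheory

open scoped ENNReal

/-- capacity of a finite set, defined through the variational formula
cap(C) = sup { E(μ,μ)⁻¹ : μ probability measure supported on C }. -/
noncomputable def capacity {E : Type*} (g : E → E → ℝ) (C : Finset E) : ℝ :=
  sSup {t : ℝ | ∃ μ : E → ℝ, (∀ x, 0 ≤ μ x) ∧ (∀ x, μ x ≠ 0 → x ∈ C) ∧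
    (∑ x ∈ C, μ x = 1) ∧ t = (∑ x ∈ C, ∑ y ∈ C, μ x * g x y * μ y)⁻¹}

/-!
Reversibility makes the Green function symmetric, and by the Markov property
`E_x[g(Z_k, y)] = (∑_{j ≥ k} P_x(Z_j = y)) / λ(y)` is the tail of a convergent series. By Fatou's
lemma, for every finite set `F` almost surely `liminf_k ∑_{y ∈ F} g(Z_k, y) = 0`. Along such a path
one picks, for any `δ > 0`, times `t₀ < t₁ < ⋯` with `g(Z_{t_a}, Z_{t_b}) ≤ δ` for `a ≠ b`: each new
time only has to make `∑_{y ∈ F} g(Z_t, y)` small for the finite set `F` of points chosen so far.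
The uniform measure on `Z_{t_0}, …, Z_{t_{n-1}}` has energy at most `g₀/n + δ`, so the capacity of
the path up to time `t_n` is at least `(g₀/n + δ)⁻¹`, which is arbitrarily large.
-/

open Filter Topology Finset

theorem ENNReal.tsum_fin_snoc {α : Type*} {n : ℕ} (f : (Fin (n + 1) → α) → ℝ≥0∞) :
    ∑' v, f v = ∑' a, ∑' u : Fin n → α, f (Fin.snoc u a) := by
  rw [← (Fin.snocEquiv fun _ => α).tsum_eq, ENNReal.tsum_prod']
  rfl

theorem MeasureTheory.ae_liminf_eq_zero_of_tendsto_lintegral {α : Type*} [MeasurableSpace α]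
    {μ : Measure α} {X : ℕ → α → ℝ≥0∞} (hX : ∀ k, Measurable (X k))
    (h : Tendsto (fun k => ∫⁻ a, X k a ∂μ) atTop (𝓝 0)) :
    ∀ᵐ a ∂μ, liminf (fun k => X k a) atTop = 0 := by
  have hfatou := lintegral_liminf_le (μ := μ) (u := atTop) hX
  rw [h.liminf_eq, nonpos_iff_eq_zero, lintegral_eq_zero_iff (Measurable.liminf hX)] at hfatou
  exact hfatou

namespace MarkovChain

section Kernel

variable {E : Type*} [DecidableEq E]

noncomputable def transitionPow (p : E → E → ℝ≥0∞) : ℕ → E → E → ℝ≥0∞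
  | 0 => fun x y => if x = y then 1 else 0
  | n + 1 => fun x y => ∑' z, transitionPow p n x z * p z y

variable (p : E → E → ℝ≥0∞)

theorem transitionPow_zero (x y : E) : transitionPow p 0 x y = if x = y then 1 else 0 := rfl

theorem transitionPow_succ (n : ℕ) (x y : E) :
    transitionPow p (n + 1) x y = ∑' z, transitionPow p n x z * p z y := rfl

theorem transitionPow_one (x y : E) : transitionPow p 1 x y = p x y := by
  simp [transitionPow_succ, transitionPow_zero]

theorem transitionPow_add (n m : ℕ) (x y : E) :
    transitionPow p (n + m) x y = ∑' z, transitionPow p n x z * transitionPow p m z y := by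
  induction m generalizing y with
  | zero => simp [transitionPow_zero]
  | succ m ih =>
    simp_rw [← add_assoc, transitionPow_succ, ih, ← ENNReal.tsum_mul_right, ← ENNReal.tsum_mul_left,
      mul_assoc]
    exact ENNReal.tsum_comm

theorem transitionPow_succ' (n : ℕ) (x y : E) :
    transitionPow p (n + 1) x y = ∑' z, p x z * transitionPow p n z y := by
  simp_rw [add_comm n, transitionPow_add, transitionPow_one]

theorem transitionPow_detailed_balance {w : E → ℝ≥0∞} (hrev : ∀ x y, w x * p x y = w y * p y x)
    (n : ℕ) (x y : E) : w x * transitionPow p n x y = w y * transitionPow p n y x := by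
  induction n generalizing y with
  | zero => by_cases h : x = y <;> simp [transitionPow_zero, h, eq_comm]
  | succ n ih =>
    calc w x * transitionPow p (n + 1) x y = ∑' z, transitionPow p n z x * (w z * p z y) := by
          simp_rw [transitionPow_succ, ← ENNReal.tsum_mul_left, ← mul_assoc, ih, mul_comm (w _)]
      _ = w y * transitionPow p (n + 1) y x := by
          simp_rw [hrev _ y, transitionPow_succ', ← ENNReal.tsum_mul_left]
          exact tsum_congr fun z => by ring

noncomputable def green (x y : E) : ℝ≥0∞ := ∑' n, transitionPow p n x y

theorem green_detailed_balance {w : E → ℝ≥0∞} (hrev : ∀ x y, w x * p x y = w y * p y x)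
    (x y : E) : w x * green p x y = w y * green p y x := by
  simp_rw [green, ← ENNReal.tsum_mul_left, transitionPow_detailed_balance p hrev]

theorem tsum_transitionPow_mul_green (k : ℕ) (x y : E) :
    ∑' z, transitionPow p k x z * green p z y = ∑' j, transitionPow p (j + k) x y := by
  simp_rw [green, ← ENNReal.tsum_mul_left, add_comm _ k, transitionPow_add]
  exact ENNReal.tsum_comm

theorem tendsto_tsum_transitionPow_mul_green {x y : E} (hxy : green p x y ≠ ∞) :
    Tendsto (fun k => ∑' z, transitionPow p k x z * green p z y) atTop (𝓝 0) := by
  simp_rw [tsum_transitionPow_mul_green]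
  exact ENNReal.tendsto_sum_nat_add _ hxy

theorem green_toReal_div_symm {lam : E → ℝ} (hlam : ∀ x, 0 < lam x)
    (hrev : ∀ x y, ENNReal.ofReal (lam x) * p x y = ENNReal.ofReal (lam y) * p y x) (x y : E) :
    (green p x y).toReal / lam y = (green p y x).toReal / lam x := by
  have h := congrArg ENNReal.toReal (green_detailed_balance p hrev x y)
  rw [ENNReal.toReal_mul, ENNReal.toReal_mul, ENNReal.toReal_ofReal (hlam x).le,
    ENNReal.toReal_ofReal (hlam y).le] at h
  rw [div_eq_div_iff (hlam y).ne' (hlam x).ne']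
  linarith

end Kernel

section PathSpace

variable {E : Type*} [MeasurableSpace E]

def IsMarkovChainLaw [DecidableEq E] (p : E → E → ℝ≥0∞) (P : E → Measure (ℕ → E)) : Prop :=
  ∀ (x : E) (n : ℕ) (w : Fin (n + 1) → E), P x {ω | ∀ i : Fin (n + 1), ω i = w i} =
    (if w 0 = x then 1 else 0) * ∏ i : Fin n, p (w i.castSucc) (w i.succ)

theorem measure_cylinder_snoc [DecidableEq E] {p : E → E → ℝ≥0∞} {P : E → Measure (ℕ → E)}
    (hP : IsMarkovChainLaw p P) (x : E) {n : ℕ} (v : Fin (n + 1) → E) (y : E) :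
    P x {ω | ∀ i : Fin (n + 2), ω i = Fin.snoc (α := fun _ => E) v y i} =
      P x {ω | ∀ i : Fin (n + 1), ω i = v i} * p (v (Fin.last n)) y := by
  rw [hP, hP, Fin.prod_univ_castSucc, mul_assoc]
  simp only [Fin.snoc_apply_zero, Fin.snoc_castSucc, Fin.succ_castSucc, Fin.succ_last,
    Fin.snoc_last]

variable [MeasurableSingletonClass E]

theorem measurableSet_cylinder {n : ℕ} (w : Fin n → E) :
    MeasurableSet {ω : ℕ → E | ∀ i : Fin n, ω i = w i} := by
  simp only [Set.ofPred_forall]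
  exact MeasurableSet.iInter fun i => measurable_pi_apply _ (measurableSet_singleton _)

variable [Countable E]

theorem measure_eval_eq_tsum_cylinder (μ : Measure (ℕ → E)) (n : ℕ) (y : E) :
    μ {ω | ω n = y} =
      ∑' u : Fin n → E, μ {ω | ∀ i : Fin (n + 1), ω i = Fin.snoc (α := fun _ => E) u y i} := by
  have hunion : {ω : ℕ → E | ω n = y} =
      ⋃ u : Fin n → E, {ω | ∀ i : Fin (n + 1), ω i = Fin.snoc (α := fun _ => E) u y i} := by
    ext ω
    simp only [Set.mem_ofPred_eq, Set.mem_iUnion, Fin.forall_fin_succ', Fin.snoc_castSucc,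
      Fin.snoc_last, Fin.val_castSucc, Fin.val_last]
    exact ⟨fun h => ⟨fun i => ω i, fun _ => rfl, h⟩, fun ⟨_, _, h⟩ => h⟩
  rw [hunion, measure_iUnion _ fun u => measurableSet_cylinder _]
  intro u v huv
  refine Set.disjoint_left.2 fun ω hu hv => huv (funext fun i => ?_)
  simpa using (hu i.castSucc).symm.trans (hv i.castSucc)

theorem lintegral_comp_eval (μ : Measure (ℕ → E)) (k : ℕ) (f : E → ℝ≥0∞) :
    ∫⁻ ω, f (ω k) ∂μ = ∑' z, f z * μ {ω | ω k = z} := by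
  rw [← lintegral_map (measurable_of_countable f) (measurable_pi_apply k), lintegral_countable']
  refine tsum_congr fun z => ?_
  rw [Measure.map_apply (measurable_pi_apply k) (measurableSet_singleton z)]
  rfl

theorem ae_frequently_sum_lt (μ : Measure (ℕ → E)) {f : E → E → ℝ} (hf : ∀ z y, 0 ≤ f z y)
    (h : ∀ y, Tendsto (fun k => ∫⁻ ω, ENNReal.ofReal (f (ω k) y) ∂μ) atTop (𝓝 0)) :
    ∀ᵐ ω ∂μ, ∀ F : Finset E, ∀ ε > 0, ∃ᶠ k in atTop, ∑ y ∈ F, f (ω k) y < ε := by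
  rw [ae_all_iff]
  intro F
  have hmeas : ∀ k, Measurable fun ω : ℕ → E => ENNReal.ofReal (∑ y ∈ F, f (ω k) y) :=
    fun k => (measurable_of_countable fun z => ENNReal.ofReal (∑ y ∈ F, f z y)).comp
      (measurable_pi_apply k)
  have hint : Tendsto (fun k => ∫⁻ ω, ENNReal.ofReal (∑ y ∈ F, f (ω k) y) ∂μ) atTop (𝓝 0) := by
    simp_rw [ENNReal.ofReal_sum_of_nonneg fun y _ => hf _ y]
    rw [← Finset.sum_const_zero (s := F)]
    refine (tendsto_finsetSum F fun y _ => h y).congr fun k => ?_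
    exact (lintegral_finsetSum F fun y _ =>
      (measurable_of_countable fun z => ENNReal.ofReal (f z y)).comp (measurable_pi_apply k)).symm
  filter_upwards [ae_liminf_eq_zero_of_tendsto_lintegral hmeas hint] with ω hω ε hε
  have : ∃ᶠ k in atTop, ENNReal.ofReal (∑ y ∈ F, f (ω k) y) < ENNReal.ofReal ε :=
    frequently_lt_of_liminf_lt (by isBoundedDefault) (hω ▸ ENNReal.ofReal_pos.2 hε)
  exact this.mono fun k hk => (ENNReal.ofReal_lt_ofReal_iff hε).1 hk

variable [DecidableEq E] {p : E → E → ℝ≥0∞} {P : E → Measure (ℕ → E)}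

theorem measure_eval_eq_transitionPow (hP : IsMarkovChainLaw p P) (x : E) (n : ℕ) (y : E) :
    P x {ω | ω n = y} = transitionPow p n x y := by
  induction n generalizing y with
  | zero =>
    have h := hP x 0 fun _ => y
    simp only [Fin.forall_fin_succ', IsEmpty.forall_iff, true_and, Fin.val_last] at h
    rw [h]
    simp [transitionPow_zero, eq_comm]
  | succ n ih =>
    rw [transitionPow_succ, measure_eval_eq_tsum_cylinder, ENNReal.tsum_fin_snoc]
    simp_rw [measure_cylinder_snoc hP, Fin.snoc_last, ENNReal.tsum_mul_right,
      ← measure_eval_eq_tsum_cylinder, ih]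

theorem tendsto_lintegral_green_eval (hP : IsMarkovChainLaw p P)
    {lam : E → ℝ} (hlam : ∀ x, 0 < lam x) {y : E} (hfin : ∀ z, green p z y ≠ ∞) (x : E) :
    Tendsto (fun k => ∫⁻ ω, ENNReal.ofReal ((green p (ω k) y).toReal / lam y) ∂P x)
      atTop (𝓝 0) := by
  have hterm : ∀ z, ENNReal.ofReal ((green p z y).toReal / lam y) =
      green p z y / ENNReal.ofReal (lam y) := fun z => by
    rw [ENNReal.ofReal_div_of_pos (hlam y), ENNReal.ofReal_toReal (hfin z)]
  have hint : ∀ k, ∫⁻ ω, ENNReal.ofReal ((green p (ω k) y).toReal / lam y) ∂P x =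
      (∑' z, transitionPow p k x z * green p z y) / ENNReal.ofReal (lam y) := fun k => by
    rw [lintegral_comp_eval (P x) k fun z => ENNReal.ofReal ((green p z y).toReal / lam y),
      div_eq_mul_inv, ← ENNReal.tsum_mul_right]
    exact tsum_congr fun z => by rw [hterm, measure_eval_eq_transitionPow hP, div_eq_mul_inv]; ring
  simp_rw [hint]
  simpa using ENNReal.Tendsto.div_const (tendsto_tsum_transitionPow_mul_green p (hfin x))
    (Or.inr (ENNReal.ofReal_pos.2 (hlam y)).ne')

end PathSpace

end MarkovChain

namespace Capacity

variable {E : Type*} {g : E → E → ℝ}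

noncomputable def energy (g : E → E → ℝ) (C : Finset E) (μ : E → ℝ) : ℝ :=
  ∑ x ∈ C, ∑ y ∈ C, μ x * g x y * μ y

theorem inf'_div_card_le_energy (hpos : ∀ x y, 0 < g x y) {C : Finset E} (hC : C.Nonempty)
    {μ : E → ℝ} (hμ0 : ∀ x, 0 ≤ μ x) (hμ1 : ∑ x ∈ C, μ x = 1) :
    C.inf' hC (fun x => g x x) / #C ≤ energy g C μ := by
  set m := C.inf' hC fun x => g x x
  have hcard : (0 : ℝ) < #C := by exact_mod_cast hC.card_pos
  have hcs : 1 ≤ (#C : ℝ) * ∑ x ∈ C, μ x ^ 2 := by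
    simpa [hμ1] using sq_sum_le_card_mul_sum_sq (s := C) (f := μ)
  calc m / #C ≤ m * ∑ x ∈ C, μ x ^ 2 := by
        rw [div_le_iff₀ hcard]
        nlinarith [(C.lt_inf'_iff hC).2 fun x _ => hpos x x]
    _ = ∑ x ∈ C, μ x * m * μ x := by rw [mul_sum]; exact sum_congr rfl fun x _ => by ring
    _ ≤ ∑ x ∈ C, μ x * g x x * μ x := by
        gcongr with x hx
        · exact hμ0 x
        · exact hμ0 x
        · exact C.inf'_le _ hx
    _ ≤ energy g C μ :=
        sum_le_sum fun x hx => single_le_sum (f := fun y => μ x * g x y * μ y)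
          (fun y _ => mul_nonneg (mul_nonneg (hμ0 x) (hpos x y).le) (hμ0 y)) hx

theorem inv_le_capacity (hpos : ∀ x y, 0 < g x y) {C : Finset E} {μ : E → ℝ}
    (hμ0 : ∀ x, 0 ≤ μ x) (hμC : ∀ x, μ x ≠ 0 → x ∈ C) (hμ1 : ∑ x ∈ C, μ x = 1)
    {e : ℝ} (he : energy g C μ ≤ e) : e⁻¹ ≤ capacity g C := by
  have hC : C.Nonempty := nonempty_of_sum_ne_zero (hμ1 ▸ one_ne_zero)
  have hm : 0 < C.inf' hC (fun x => g x x) / #C :=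
    div_pos ((C.lt_inf'_iff hC).2 fun x _ => hpos x x) (by exact_mod_cast hC.card_pos)
  have hbdd : BddAbove {t : ℝ | ∃ ν : E → ℝ, (∀ x, 0 ≤ ν x) ∧ (∀ x, ν x ≠ 0 → x ∈ C) ∧
      (∑ x ∈ C, ν x = 1) ∧ t = (∑ x ∈ C, ∑ y ∈ C, ν x * g x y * ν y)⁻¹} := by
    refine ⟨(C.inf' hC (fun x => g x x) / #C)⁻¹, ?_⟩
    rintro t ⟨ν, hν0, -, hν1, rfl⟩
    exact inv_anti₀ hm (inf'_div_card_le_energy hpos hC hν0 hν1)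
  calc e⁻¹ ≤ (energy g C μ)⁻¹ :=
        inv_anti₀ (hm.trans_le (inf'_div_card_le_energy hpos hC hμ0 hμ1)) he
    _ ≤ capacity g C := le_csSup hbdd ⟨μ, hμ0, hμC, hμ1, rfl⟩

variable {w : ℕ → E} {n : ℕ}

theorem sum_sum_le_of_offDiag_le {g0 δ : ℝ} (hδ : 0 ≤ δ) (hdiag : ∀ a < n, g (w a) (w a) ≤ g0)
    (hoff : ∀ a < n, ∀ b < n, a ≠ b → g (w a) (w b) ≤ δ) :
    ∑ a ∈ range n, ∑ b ∈ range n, g (w a) (w b) ≤ n * g0 + n ^ 2 * δ := by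
  calc ∑ a ∈ range n, ∑ b ∈ range n, g (w a) (w b)
      ≤ ∑ a ∈ range n, ∑ b ∈ range n, ((if a = b then g0 else 0) + δ) := by
        gcongr with a ha b hb
        rw [mem_range] at ha hb
        split_ifs with hab
        · subst hab; linarith [hdiag a ha]
        · simpa using hoff a ha b hb hab
    _ = ∑ a ∈ range n, (g0 + n * δ) := sum_congr rfl fun a ha => by simp [sum_add_distrib, ha]
    _ = n * g0 + n ^ 2 * δ := by simp; ring

variable [DecidableEq E]

noncomputable def empirical (w : ℕ → E) (n : ℕ) (x : E) : ℝ :=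
  (∑ a ∈ range n, if w a = x then 1 else 0) / n

theorem empirical_nonneg (x : E) : 0 ≤ empirical w n x := by
  unfold empirical
  positivity

theorem mem_of_empirical_ne_zero {C : Finset E} (hw : ∀ a < n, w a ∈ C) {x : E}
    (hx : empirical w n x ≠ 0) : x ∈ C := by
  obtain ⟨a, ha, hax⟩ : ∃ a ∈ range n, w a = x := by
    by_contra! h
    exact hx (by simpa [empirical] using Or.inl fun a ha => h a (mem_range.2 ha))
  exact hax ▸ hw a (mem_range.1 ha)

theorem sum_empirical_mul {C : Finset E} (hw : ∀ a < n, w a ∈ C) (f : E → ℝ) :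
    ∑ x ∈ C, empirical w n x * f x = (∑ a ∈ range n, f (w a)) / n := by
  simp_rw [empirical, div_mul_eq_mul_div, ← sum_div, sum_mul, ite_mul, one_mul, zero_mul]
  rw [sum_comm]
  exact congrArg (· / _) (sum_congr rfl fun a ha => by simp [hw a (mem_range.1 ha)])

theorem sum_empirical {C : Finset E} (hw : ∀ a < n, w a ∈ C) (hn : 0 < n) :
    ∑ x ∈ C, empirical w n x = 1 := by
  simpa [hn.ne'] using sum_empirical_mul hw fun _ => 1

theorem energy_empirical {C : Finset E} (hw : ∀ a < n, w a ∈ C) :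
    energy g C (empirical w n) = (∑ a ∈ range n, ∑ b ∈ range n, g (w a) (w b)) / n ^ 2 := by
  simp_rw [energy, mul_assoc, ← mul_sum, mul_comm _ (empirical w n _), sum_empirical_mul hw,
    ← sum_div, div_div, sq]

theorem exists_strictMono_pairwise_le (hpos : ∀ x y, 0 < g x y) (hsymm : ∀ x y, g x y = g y x)
    {z : ℕ → E} (hz : ∀ F : Finset E, ∀ ε > 0, ∃ᶠ k in atTop, ∑ y ∈ F, g (z k) y < ε)
    {δ : ℝ} (hδ : 0 < δ) :
    ∃ t : ℕ → ℕ, StrictMono t ∧ ∀ a b, a ≠ b → g (z (t a)) (z (t b)) ≤ δ := by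
  obtain ⟨t, -, ht⟩ := exists_seq_of_forall_finset_exists (fun _ => True)
    (fun k l => k < l ∧ g (z l) (z k) ≤ δ) fun S _ => by
      obtain ⟨k, hsum, hk⟩ :=
        ((hz (S.image z) δ hδ).and_eventually (eventually_gt_atTop (S.sup id))).exists
      refine ⟨k, trivial, fun x hx => ⟨(le_sup (f := id) hx).trans_lt hk, ?_⟩⟩
      exact (single_le_sum (fun y _ => (hpos (z k) y).le) (mem_image_of_mem z hx)).trans hsum.le
  refine ⟨t, fun a b hab => (ht a b hab).1, fun a b hab => ?_⟩
  rcases hab.lt_or_gt with hab | hab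
  · exact hsymm _ _ ▸ (ht a b hab).2
  · exact (ht b a hab).2

theorem tendsto_capacity_image_range (hpos : ∀ x y, 0 < g x y) (hsymm : ∀ x y, g x y = g y x)
    {g0 : ℝ} (hdiag : ∀ x, g x x ≤ g0) {z : ℕ → E}
    (hz : ∀ F : Finset E, ∀ ε > 0, ∃ᶠ k in atTop, ∑ y ∈ F, g (z k) y < ε) :
    Tendsto (fun k => capacity g ((range (k + 1)).image z)) atTop atTop := by
  refine tendsto_atTop.2 fun M => ?_
  set c := max M 1
  have hc : 0 < c := lt_max_of_lt_right one_pos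
  have hg0 : 0 < g0 := (hpos (z 0) (z 0)).trans_le (hdiag _)
  obtain ⟨t, ht, hpair⟩ := exists_strictMono_pairwise_le hpos hsymm hz (δ := (2 * c)⁻¹)
    (by positivity)
  obtain ⟨n, hn⟩ := exists_nat_ge (2 * c * g0)
  have hn0 : (0 : ℝ) < n := (by positivity : (0 : ℝ) < 2 * c * g0).trans_le hn
  filter_upwards [eventually_ge_atTop (t n)] with k hk
  have hw : ∀ a < n, (z ∘ t) a ∈ (range (k + 1)).image z := fun a ha =>
    mem_image_of_mem z (mem_range.2 (Nat.lt_succ_of_le ((ht ha).le.trans hk)))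
  have henergy : energy g ((range (k + 1)).image z) (empirical (z ∘ t) n) ≤ c⁻¹ := by
    rw [energy_empirical hw, div_le_iff₀ (by positivity)]
    refine (sum_sum_le_of_offDiag_le (by positivity) (fun a _ => hdiag _)
      fun a _ b _ hab => hpair a b hab).trans ?_
    have hsplit : c⁻¹ * n ^ 2 = n ^ 2 * (2 * c)⁻¹ + n ^ 2 * (2 * c)⁻¹ := by field_simp; ring
    have hdiag_part : n * g0 ≤ n ^ 2 * (2 * c)⁻¹ := by
      rw [← div_eq_mul_inv, le_div_iff₀ (by positivity)]
      nlinarith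
    linarith
  calc M ≤ c := le_max_left M 1
    _ = c⁻¹⁻¹ := (inv_inv c).symm
    _ ≤ _ := inv_le_capacity hpos (fun _ => empirical_nonneg _)
        (fun _ => mem_of_empirical_ne_zero hw) (sum_empirical hw (by exact_mod_cast hn0)) henergy

end Capacity

open MarkovChain Capacity

theorem stmt_4_general {E : Type*} [Countable E] [DecidableEq E]
    [MeasurableSpace E] [MeasurableSingletonClass E]
    (lam : E → ℝ) (hlam : ∀ x, 0 < lam x)
    (P : E → Measure (ℕ → E))
    (p : E → E → ℝ≥0∞)
    (hrev : ∀ x y, ENNReal.ofReal (lam x) * p x y = ENNReal.ofReal (lam y) * p y x)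
    (hFDD : ∀ (x : E) (n : ℕ) (w : Fin (n + 1) → E),
      P x {ω | ∀ i : Fin (n + 1), ω i = w i} =
        (if w 0 = x then 1 else 0) * ∏ i : Fin n, p (w i.castSucc) (w i.succ))
    (hfin : ∀ x y : E, (∑' k : ℕ, P x {ω | ω k = y}) < ⊤)
    (g : E → E → ℝ)
    (hg : ∀ x y, g x y = ((∑' k : ℕ, P x {ω | ω k = y}).toReal) / lam y)
    (hpos : ∀ x y, 0 < g x y)
    (g0 : ℝ) (hdiag : ∀ x, g x x ≤ g0) :
    ∀ x : E, ∀ᵐ ω ∂(P x),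
      Filter.Tendsto (fun k => capacity g (Finset.image ω (Finset.range (k + 1))))
        Filter.atTop Filter.atTop := by
  have hq := measure_eval_eq_transitionPow hFDD
  have hgreen : ∀ x y, g x y = (green p x y).toReal / lam y := by
    simp_rw [hg, hq, green, implies_true]
  have hfin' : ∀ x y, green p x y ≠ ∞ := fun x y => by simpa only [green, hq] using (hfin x y).ne
  have hsymm : ∀ x y, g x y = g y x := fun x y => by
    rw [hgreen, hgreen, green_toReal_div_symm p hlam hrev]
  intro x
  have hlim : ∀ y, Tendsto (fun k => ∫⁻ ω, ENNReal.ofReal (g (ω k) y) ∂P x) atTop (𝓝 0) :=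
    fun y => by simpa only [hgreen] using tendsto_lintegral_green_eval hFDD hlam (hfin' · y) x
  filter_upwards [ae_frequently_sum_lt (P x) (fun z y => (hpos z y).le) hlim] with ω hω
  exact tendsto_capacity_image_range hpos hsymm hdiag hω

/-- For a transient reversible random walk on a locally finite connected
weighted graph whose Green function is bounded on the diagonal by g₀, for every
starting point x, P_x-almost surely cap({Z₀,…,Z_k}) → ∞ as k → ∞. -/
theorem stmt_4 {E : Type*} [Countable E] [DecidableEq E]
    [MeasurableSpace E] [MeasurableSingletonClass E]
    (lam : E → ℝ) (hlam : ∀ x, 0 < lam x)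
    (P : E → Measure (ℕ → E)) (hprob : ∀ x, IsProbabilityMeasure (P x))
    (p : E → E → ℝ≥0∞) (hp : ∀ x, ∑' y, p x y = 1)
    (hrev : ∀ x y, ENNReal.ofReal (lam x) * p x y = ENNReal.ofReal (lam y) * p y x)
    (hFDD : ∀ (x : E) (n : ℕ) (w : Fin (n + 1) → E),
      P x {ω | ∀ i : Fin (n + 1), ω i = w i} =
        (if w 0 = x then 1 else 0) * ∏ i : Fin n, p (w i.castSucc) (w i.succ))
    (hfin : ∀ x y : E, (∑' k : ℕ, P x {ω | ω k = y}) < ⊤)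
    (g : E → E → ℝ)
    (hg : ∀ x y, g x y = ((∑' k : ℕ, P x {ω | ω k = y}).toReal) / lam y)
    (hpos : ∀ x y, 0 < g x y)
    (g0 : ℝ) (hdiag : ∀ x, g x x ≤ g0) :
    ∀ x : E, ∀ᵐ ω ∂(P x),
      Filter.Tendsto (fun k => capacity g (Finset.image ω (Finset.range (k + 1))))
        Filter.atTop Filter.atTop :=
  stmt_4_general lam hlam P p hrev hFDD hfin g hg hpos g0 hdiag
end

section
/- Let ℐ^u be the interlacement set at level u > 0 on a transient weighted graph with sup_x g(x,x) < ∞, characterized by P^I[ℐ^u ∩ C = ∅] = exp(−u·cap(C)) for finite C ⊆ E. Then P^I-almost surely, for every x ∈ E, the random walk from x hits ℐ^u in finite time with P_x-probability 1. -/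
open MeasureTheory

open scoped ENNReal

/-!
Averaging over the interlacement first, `E^I[P_x(the walk avoids ℐ^u)] ≤ E_x[exp(-u cap{Z₀,…,Z_n})]`
for every `n`. By transience `E_x[g(Z_k, y)]` is the tail of the convergent series
`∑ₘ P_x[Z_m = y] / λ_y`, so almost surely the walk visits points whose Green sums towards any
given finite set are arbitrarily small. Collecting such points greedily (`g` is symmetric by
reversibility) gives `n + 1` visited points of off-diagonal energy below `g0`, and the uniform
measure on them shows `cap{Z₀,…,Z_N} ≥ (n + 1) / (2 g0)`. Hence the right-hand side tends to `0`
by dominated convergence, and the walk hits `ℐ^u` almost surely for `P^I`-almost every `w`.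
-/

open Filter Topology

section Countable

variable {α β : Type*} [MeasurableSpace α] [MeasurableSpace β] [Countable β]
  [MeasurableSingletonClass β] (μ : Measure α) {h : α → β}

lemma lintegral_comp_eq_tsum (hh : Measurable h) (f : β → ℝ≥0∞) :
    ∫⁻ a, f (h a) ∂μ = ∑' b, f b * μ (h ⁻¹' {b}) := by
  rw [← lintegral_map (measurable_of_countable f) hh, lintegral_countable']
  simp_rw [Measure.map_apply hh (measurableSet_singleton _)]

lemma measure_preimage_eq_tsum (hh : Measurable h) (S : Set β) :
    μ (h ⁻¹' S) = ∑' b, S.indicator (fun b => μ (h ⁻¹' {b})) b := by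
  rw [← Measure.map_apply hh MeasurableSet.of_discrete,
    ← Measure.tsum_indicator_apply_singleton _ _ MeasurableSet.of_discrete]
  simp_rw [Measure.map_apply hh (measurableSet_singleton _)]

end Countable

section Paths

variable {E : Type*}

def pathPrefix (n : ℕ) (ω : ℕ → E) : Fin (n + 1) → E := fun i => ω i

lemma measurable_pathPrefix [MeasurableSpace E] (n : ℕ) : Measurable (pathPrefix (E := E) n) :=
  measurable_pi_lambda _ fun _ => measurable_pi_apply _

variable [DecidableEq E]

def pathRange (ω : ℕ → E) (n : ℕ) : Finset E := (Finset.range (n + 1)).image ω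

lemma image_pathPrefix (ω : ℕ → E) (n : ℕ) :
    Finset.univ.image (pathPrefix n ω) = pathRange ω n := by
  ext z
  simp [pathPrefix, pathRange, Fin.exists_iff]

lemma measurable_comp_pathRange [Countable E] [MeasurableSpace E] [MeasurableSingletonClass E]
    {β : Type*} [MeasurableSpace β] (F : Finset E → β) (n : ℕ) :
    Measurable fun ω => F (pathRange ω n) := by
  simp_rw [← image_pathPrefix]
  exact (measurable_of_countable fun v => F (Finset.univ.image v)).comp (measurable_pathPrefix n)

lemma pathRange_mono (ω : ℕ → E) : Monotone (pathRange ω) := fun _ _ hmn =>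
  Finset.image_subset_image (Finset.range_subset_range.2 (by omega))

lemma exists_subset_pathRange {ω : ℕ → E} (D : Finset E) (hD : ↑D ⊆ Set.range ω) :
    ∃ N, D ⊆ pathRange ω N := by
  induction D using Finset.induction_on with
  | empty => exact ⟨0, Finset.empty_subset _⟩
  | insert a D _ ih =>
    rw [Finset.coe_insert, Set.insert_subset_iff] at hD
    obtain ⟨⟨k, rfl⟩, hD⟩ := hD
    obtain ⟨N, hN⟩ := ih hD
    refine ⟨max N k, Finset.insert_subset ?_ (hN.trans (pathRange_mono ω (le_max_left N k)))⟩
    simpa [pathRange] using ⟨k, Or.inr le_rfl, rfl⟩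

end Paths

section Markov

variable {E : Type*} [DecidableEq E]

noncomputable def pathWeight (p : E → E → ℝ≥0∞) (x : E) (n : ℕ) (v : Fin (n + 1) → E) : ℝ≥0∞ :=
  (if v 0 = x then 1 else 0) * ∏ i : Fin n, p (v i.castSucc) (v i.succ)

lemma pathWeight_snoc (p : E → E → ℝ≥0∞) (x : E) (n : ℕ) (v : Fin (n + 1) → E) (z : E) :
    pathWeight p x (n + 1) (Fin.snoc v z) = pathWeight p x n v * p (v (Fin.last n)) z := by
  simp only [pathWeight, Fin.prod_univ_castSucc, Fin.succ_castSucc, Fin.snoc_castSucc,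
    Fin.succ_last, Fin.snoc_last]
  rw [← Fin.castSucc_zero, Fin.snoc_castSucc, mul_assoc]

noncomputable def nStep (p : E → E → ℝ≥0∞) : ℕ → E → E → ℝ≥0∞
  | 0, x, y => if x = y then 1 else 0
  | n + 1, x, y => ∑' z, nStep p n x z * p z y

variable {p : E → E → ℝ≥0∞}

lemma nStep_add (k m : ℕ) (x y : E) :
    nStep p (k + m) x y = ∑' z, nStep p k x z * nStep p m z y := by
  induction m generalizing y with
  | zero => simp [nStep]
  | succ m ih =>
    show nStep p (k + m + 1) x y = _
    simp only [nStep, ih, ← ENNReal.tsum_mul_right, ← ENNReal.tsum_mul_left, mul_assoc]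
    exact ENNReal.tsum_comm

lemma nStep_succ' (n : ℕ) (x y : E) : nStep p (n + 1) x y = ∑' z, p x z * nStep p n z y := by
  rw [add_comm, nStep_add]
  simp [nStep]

lemma nStep_reversible {m : E → ℝ≥0∞} (hrev : ∀ x y, m x * p x y = m y * p y x) (n : ℕ)
    (x y : E) : m x * nStep p n x y = m y * nStep p n y x := by
  induction n generalizing x y with
  | zero => by_cases h : x = y <;> simp [nStep, h, eq_comm]
  | succ n ih =>
    rw [nStep_succ', nStep, ← ENNReal.tsum_mul_left, ← ENNReal.tsum_mul_left]
    refine tsum_congr fun z => ?_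
    rw [← mul_assoc, hrev, mul_comm (m z), mul_assoc, ih]
    ring

variable [MeasurableSpace E] {P : E → Measure (ℕ → E)}
  (hFDD : ∀ (x : E) (n : ℕ) (w : Fin (n + 1) → E),
      P x {ω | ∀ i : Fin (n + 1), ω i = w i} =
        (if w 0 = x then 1 else 0) * ∏ i : Fin n, p (w i.castSucc) (w i.succ))
include hFDD

lemma measure_pathPrefix_singleton (x : E) (n : ℕ) (v : Fin (n + 1) → E) :
    P x (pathPrefix n ⁻¹' {v}) = pathWeight p x n v := by
  rw [pathWeight, ← hFDD]
  congr 1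
  ext ω
  simp [pathPrefix, funext_iff]

variable [Countable E] [MeasurableSingletonClass E]

lemma measure_eval_eq_tsum (x y : E) (n : ℕ) :
    P x {ω | ω n = y} =
      ∑' v : Fin (n + 1) → E, if v (Fin.last n) = y then pathWeight p x n v else 0 := by
  rw [show {ω : ℕ → E | ω n = y} = pathPrefix n ⁻¹' {v | v (Fin.last n) = y} from rfl,
    measure_preimage_eq_tsum _ (measurable_pathPrefix n)]
  refine tsum_congr fun v => ?_
  simp [Set.indicator, measure_pathPrefix_singleton hFDD]

lemma measure_eval_succ (x y : E) (n : ℕ) :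
    P x {ω | ω (n + 1) = y} = ∑' z, P x {ω | ω n = z} * p z y := by
  rw [measure_eval_eq_tsum hFDD, ← (Fin.snocEquiv fun _ => E).tsum_eq, ENNReal.tsum_prod']
  simp_rw [measure_eval_eq_tsum hFDD, ← ENNReal.tsum_mul_right]
  conv_rhs => rw [ENNReal.tsum_comm]
  simp only [Fin.snocEquiv, Equiv.coe_fn_mk, Fin.snoc_last, pathWeight_snoc]
  rw [ENNReal.tsum_comm]
  simp

lemma measure_eval_eq_nStep (x y : E) (n : ℕ) : P x {ω | ω n = y} = nStep p n x y := by
  induction n generalizing y with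
  | zero =>
    rw [show {ω : ℕ → E | ω 0 = y} = {ω | ∀ i : Fin (0 + 1), ω i = y} by ext; simp,
      hFDD x 0 fun _ => y]
    simp [nStep, eq_comm]
  | succ n ih => rw [measure_eval_succ hFDD]; simp only [ih, nStep]

end Markov

section Transience

variable {E : Type*} [Countable E] [DecidableEq E] [MeasurableSpace E]
  [MeasurableSingletonClass E] {P : E → Measure (ℕ → E)} {p : E → E → ℝ≥0∞}

noncomputable def green (P : E → Measure (ℕ → E)) (x y : E) : ℝ≥0∞ := ∑' k, P x {ω | ω k = y}

variable (hFDD : ∀ (x : E) (n : ℕ) (w : Fin (n + 1) → E),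
      P x {ω | ∀ i : Fin (n + 1), ω i = w i} =
        (if w 0 = x then 1 else 0) * ∏ i : Fin n, p (w i.castSucc) (w i.succ))
include hFDD

lemma green_reversible {m : E → ℝ≥0∞} (hrev : ∀ x y, m x * p x y = m y * p y x) (x y : E) :
    m x * green P x y = m y * green P y x := by
  simp_rw [green, measure_eval_eq_nStep hFDD, ← ENNReal.tsum_mul_left, nStep_reversible hrev]

lemma green_symm {lam : E → ℝ} (hlam : ∀ x, 0 < lam x)
    (hrev : ∀ x y, ENNReal.ofReal (lam x) * p x y = ENNReal.ofReal (lam y) * p y x)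
    {g : E → E → ℝ} (hg : ∀ x y, g x y = (green P x y).toReal / lam y) (x y : E) :
    g x y = g y x := by
  have h := congrArg ENNReal.toReal (green_reversible hFDD hrev x y)
  rw [ENNReal.toReal_mul, ENNReal.toReal_mul, ENNReal.toReal_ofReal (hlam x).le,
    ENNReal.toReal_ofReal (hlam y).le] at h
  rw [hg, hg, div_eq_div_iff (hlam y).ne' (hlam x).ne']
  linarith

lemma lintegral_green_eval (x y : E) (k : ℕ) :
    ∫⁻ ω, green P (ω k) y ∂P x = ∑' m, P x {ω | ω (m + k) = y} := by
  rw [lintegral_comp_eq_tsum (P x) (measurable_pi_apply k) (green P · y)]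
  simp_rw [green, Set.preimage, Set.mem_singleton_iff, measure_eval_eq_nStep hFDD, add_comm _ k,
    nStep_add, ← ENNReal.tsum_mul_right]
  rw [ENNReal.tsum_comm]
  simp_rw [mul_comm]

variable (hfin : ∀ x y : E, green P x y < ⊤)
include hfin

lemma tendsto_lintegral_green_eval (x y : E) :
    Tendsto (fun k => ∫⁻ ω, green P (ω k) y ∂P x) atTop (𝓝 0) := by
  simp_rw [lintegral_green_eval hFDD]
  exact ENNReal.tendsto_sum_nat_add (fun m => P x {ω | ω m = y}) (hfin x y).ne

lemma measure_forall_le_sum_green_eq_zero (x : E) (F : Finset E) {a : E → ℝ≥0∞}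
    (ha : ∀ y, a y ≠ ⊤) {c : ℝ≥0∞} (hc : c ≠ 0) (hc' : c ≠ ⊤) :
    P x {ω | ∀ k, c ≤ ∑ y ∈ F, a y * green P (ω k) y} = 0 := by
  have hmeas : ∀ k y, Measurable fun ω : ℕ → E => green P (ω k) y :=
    fun k y => (measurable_of_countable (green P · y)).comp (measurable_pi_apply k)
  have hbound : ∀ k, P x {ω | ∀ k, c ≤ ∑ y ∈ F, a y * green P (ω k) y}
      ≤ (∑ y ∈ F, a y * ∫⁻ ω, green P (ω k) y ∂P x) / c := fun k => calc
    _ ≤ P x {ω | c ≤ ∑ y ∈ F, a y * green P (ω k) y} := measure_mono fun _ hω => by exact hω k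
    _ ≤ (∫⁻ ω, ∑ y ∈ F, a y * green P (ω k) y ∂P x) / c :=
      meas_ge_le_lintegral_div
        (Finset.measurable_sum _ fun y _ => (hmeas k y).const_mul _).aemeasurable hc hc'
    _ = _ := by
      rw [lintegral_finsetSum _ fun y _ => (hmeas k y).const_mul _]
      simp_rw [lintegral_const_mul _ (hmeas k _)]
  have hlim : Tendsto (fun k => (∑ y ∈ F, a y * ∫⁻ ω, green P (ω k) y ∂P x) / c)
      atTop (𝓝 0) := by
    simpa using ENNReal.Tendsto.div_const (tendsto_finsetSum F fun y _ =>
      ENNReal.Tendsto.const_mul (tendsto_lintegral_green_eval hFDD hfin x y) (Or.inr (ha y)))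
      (Or.inr hc)
  exact le_antisymm (ge_of_tendsto' hlim hbound) zero_le

lemma ae_exists_sum_green_lt {lam : E → ℝ} (hlam : ∀ x, 0 < lam x) {g : E → E → ℝ}
    (hg : ∀ x y, g x y = (green P x y).toReal / lam y) (x : E) :
    ∀ᵐ ω ∂P x, ∀ F : Finset E, ∀ ε > 0, ∃ k, ∑ y ∈ F, g (ω k) y < ε := by
  have hofReal : ∀ z y, ENNReal.ofReal (g z y) = (ENNReal.ofReal (lam y))⁻¹ * green P z y := by
    intro z y
    rw [hg, ENNReal.ofReal_div_of_pos (hlam y), ENNReal.ofReal_toReal (hfin z y).ne,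
      ENNReal.div_eq_inv_mul]
  have hnull (F : Finset E) (j : ℕ) :
      ∀ᵐ ω ∂P x, ∃ k, ∑ y ∈ F, g (ω k) y < 1 / (j + 1) := by
    rw [ae_iff]
    refine measure_mono_null ?_
      (measure_forall_le_sum_green_eq_zero hFDD hfin x F
        (fun y => ENNReal.inv_ne_top.2 (ENNReal.ofReal_pos.2 (hlam y)).ne')
        (c := ENNReal.ofReal (1 / (j + 1))) (by simp; positivity) ENNReal.ofReal_ne_top)
    intro ω hω k
    calc ENNReal.ofReal (1 / (j + 1)) ≤ ENNReal.ofReal (∑ y ∈ F, g (ω k) y) :=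
          ENNReal.ofReal_le_ofReal (not_lt.1 (not_exists.1 hω k))
      _ = _ := by
        rw [ENNReal.ofReal_sum_of_nonneg fun y _ => by
          rw [hg]; exact div_nonneg ENNReal.toReal_nonneg (hlam y).le]
        simp_rw [hofReal]
  filter_upwards [ae_all_iff.2 fun F => ae_all_iff.2 (hnull F)] with ω hω F ε hε
  obtain ⟨j, hj⟩ := exists_nat_one_div_lt hε
  obtain ⟨k, hk⟩ := hω F j
  exact ⟨k, hk.trans hj⟩

end Transience

section Capacity

variable {E : Type*} {g : E → E → ℝ}

lemma capacity_nonneg (hg : ∀ x y, 0 ≤ g x y) (C : Finset E) : 0 ≤ capacity g C := by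
  refine Real.sSup_nonneg ?_
  rintro t ⟨μ, hμ, -, -, rfl⟩
  exact inv_nonneg.2 <| Finset.sum_nonneg fun x _ => Finset.sum_nonneg fun y _ =>
    mul_nonneg (mul_nonneg (hμ x) (hg x y)) (hμ y)

lemma le_energy_of_le {C : Finset E} {μ : E → ℝ} (hμ : ∀ x, 0 ≤ μ x) (hμ1 : ∑ x ∈ C, μ x = 1)
    {m : ℝ} (hm : ∀ x ∈ C, ∀ y ∈ C, m ≤ g x y) :
    m ≤ ∑ x ∈ C, ∑ y ∈ C, μ x * g x y * μ y := calc
  m = ∑ x ∈ C, ∑ y ∈ C, μ x * m * μ y := by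
    simp_rw [← Finset.mul_sum, hμ1, mul_one, ← Finset.sum_mul, hμ1, one_mul]
  _ ≤ _ := Finset.sum_le_sum fun x hx => Finset.sum_le_sum fun y hy =>
    mul_le_mul_of_nonneg_right (mul_le_mul_of_nonneg_left (hm x hx y hy) (hμ x)) (hμ y)

variable (hpos : ∀ x y, 0 < g x y)
include hpos

lemma inv_energy_le_capacity {C : Finset E} {μ : E → ℝ} (hμ : ∀ x, 0 ≤ μ x)
    (hμC : ∀ x, μ x ≠ 0 → x ∈ C) (hμ1 : ∑ x ∈ C, μ x = 1) :
    (∑ x ∈ C, ∑ y ∈ C, μ x * g x y * μ y)⁻¹ ≤ capacity g C := by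
  have hC : (C ×ˢ C).Nonempty := by
    obtain ⟨x, hx⟩ := Finset.nonempty_of_sum_ne_zero (hμ1.trans_ne one_ne_zero)
    exact ⟨(x, x), Finset.mem_product.2 ⟨hx, hx⟩⟩
  obtain ⟨q, -, hq⟩ := (C ×ˢ C).exists_min_image (fun q => g q.1 q.2) hC
  refine le_csSup ⟨(g q.1 q.2)⁻¹, ?_⟩ ⟨μ, hμ, hμC, hμ1, rfl⟩
  rintro t ⟨ν, hν, -, hν1, rfl⟩
  exact inv_anti₀ (hpos _ _) <| le_energy_of_le hν hν1 fun x hx y hy =>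
    hq (x, y) (Finset.mem_product.2 ⟨hx, hy⟩)

lemma capacity_mono {C C' : Finset E} (h : C ⊆ C') : capacity g C ≤ capacity g C' := by
  refine Real.sSup_le ?_ (capacity_nonneg (fun x y => (hpos x y).le) C')
  rintro t ⟨μ, hμ, hμC, hμ1, rfl⟩
  have hsum : ∀ f : E → ℝ, (∀ x, μ x = 0 → f x = 0) → ∑ x ∈ C, f x = ∑ x ∈ C', f x :=
    fun f hf => Finset.sum_subset h fun x _ hx => hf x (not_imp_comm.1 (hμC x) hx)
  rw [hsum μ fun _ => id] at hμ1
  have hE : ∑ x ∈ C, ∑ y ∈ C, μ x * g x y * μ y = ∑ x ∈ C', ∑ y ∈ C', μ x * g x y * μ y := by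
    rw [hsum (fun x => ∑ y ∈ C, μ x * g x y * μ y) fun x hx => by simp [hx]]
    exact Finset.sum_congr rfl fun x _ => hsum _ fun y hy => by simp [hy]
  rw [hE]
  exact inv_energy_le_capacity hpos hμ (fun x hx => h (hμC x hx)) hμ1

lemma sq_card_div_le_capacity {D : Finset E} (hD : D.Nonempty) :
    (D.card : ℝ) ^ 2 / ∑ a ∈ D, ∑ b ∈ D, g a b ≤ capacity g D := by
  classical
  have hcard : (0 : ℝ) < D.card := by exact_mod_cast hD.card_pos
  set μ : E → ℝ := fun x => if x ∈ D then (D.card : ℝ)⁻¹ else 0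
  have hμ1 : ∑ x ∈ D, μ x = 1 := by
    rw [Finset.sum_congr rfl fun x hx => if_pos hx, Finset.sum_const, nsmul_eq_mul,
      mul_inv_cancel₀ hcard.ne']
  have henergy : ∑ x ∈ D, ∑ y ∈ D, μ x * g x y * μ y
      = (∑ a ∈ D, ∑ b ∈ D, g a b) / (D.card : ℝ) ^ 2 := by
    rw [Finset.sum_div]
    refine Finset.sum_congr rfl fun x hx => ?_
    rw [Finset.sum_div]
    refine Finset.sum_congr rfl fun y hy => ?_
    simp only [μ, if_pos hx, if_pos hy]
    field_simp
  have h := inv_energy_le_capacity hpos (μ := μ)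
    (fun x => by simp only [μ]; split_ifs <;> positivity)
    (fun x hx => by_contra fun h => hx (if_neg h)) hμ1
  rwa [henergy, inv_div] at h

end Capacity

section Greedy

variable {E : Type*} [DecidableEq E] {g : E → E → ℝ} (hpos : ∀ x y, 0 < g x y)
  (hsym : ∀ x y, g x y = g y x) {ω : ℕ → E}
  (hω : ∀ F : Finset E, ∀ ε > 0, ∃ k, ∑ y ∈ F, g (ω k) y < ε)
include hpos hsym hω

lemma exists_subset_range_offDiag_energy_lt (n : ℕ) {η : ℝ} (hη : 0 < η) :
    ∃ D : Finset E, D.card = n + 1 ∧ ↑D ⊆ Set.range ω ∧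
      ∑ a ∈ D, ∑ b ∈ D, g a b < ∑ a ∈ D, g a a + η := by
  induction n generalizing η with
  | zero => exact ⟨{ω 0}, rfl, by simp, by simpa using hη⟩
  | succ n ih =>
    obtain ⟨D, hcard, hDω, hD⟩ := ih (half_pos hη)
    have hDne : D.Nonempty := Finset.card_pos.1 (by omega)
    -- `δ ≤ g b b` on `D` keeps the new point out of `D`; by symmetry it adds at most
    -- `g (ω k) (ω k) + 2 δ` to the energy.
    set δ := min (η / 4) (D.inf' hDne fun b => g b b)
    have hδ : 0 < δ := lt_min (by positivity) ((Finset.lt_inf'_iff _).2 fun b _ => hpos b b)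
    obtain ⟨k, hk⟩ := hω D δ hδ
    have hz : ω k ∉ D := fun hzD => by
      have h1 : g (ω k) (ω k) ≤ ∑ b ∈ D, g (ω k) b :=
        Finset.single_le_sum (fun b _ => (hpos _ b).le) hzD
      have h2 : δ ≤ g (ω k) (ω k) := (min_le_right _ _).trans (Finset.inf'_le _ hzD)
      linarith
    refine ⟨insert (ω k) D, by rw [Finset.card_insert_of_notMem hz, hcard],
      by simpa using Set.insert_subset (Set.mem_range_self k) hDω, ?_⟩
    have hcol : ∑ a ∈ D, g a (ω k) = ∑ a ∈ D, g (ω k) a :=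
      Finset.sum_congr rfl fun a _ => hsym a (ω k)
    simp only [Finset.sum_insert hz, Finset.sum_add_distrib, hcol]
    linarith [min_le_left (η / 4) (D.inf' hDne fun b => g b b)]

lemma tendsto_capacity_pathRange {g0 : ℝ} (hdiag : ∀ x, g x x ≤ g0) :
    Tendsto (fun n => capacity g (pathRange ω n)) atTop atTop := by
  refine tendsto_atTop_atTop_of_monotone (fun m n hmn => capacity_mono hpos
    (pathRange_mono ω hmn)) fun t => ?_
  have hg0 : 0 < g0 := (hpos (ω 0) (ω 0)).trans_le (hdiag _)
  obtain ⟨n, hn⟩ := exists_nat_ge (2 * g0 * t)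
  obtain ⟨D, hcard, hDω, hD⟩ := exists_subset_range_offDiag_energy_lt hpos hsym hω n hg0
  obtain ⟨N, hN⟩ := exists_subset_pathRange D hDω
  have hDne : D.Nonempty := Finset.card_pos.1 (by omega)
  refine ⟨N, le_trans ?_ ((sq_card_div_le_capacity hpos hDne).trans (capacity_mono hpos hN))⟩
  have hdiagD : ∑ a ∈ D, g a a ≤ (n + 1) * g0 := by
    simpa [hcard] using Finset.sum_le_card_nsmul D (fun a => g a a) g0 fun a _ => hdiag a
  have hT : 0 < ∑ a ∈ D, ∑ b ∈ D, g a b :=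
    Finset.sum_pos (fun a _ => Finset.sum_pos (fun b _ => hpos a b) hDne) hDne
  rw [le_div_iff₀ hT, hcard]
  push_cast
  nlinarith

end Greedy

section Annealed

lemma ae_eq_zero_of_le_of_tendsto_lintegral {α : Type*} [MeasurableSpace α] {μ : Measure α}
    {φ : α → ℝ≥0∞} {f : ℕ → α → ℝ≥0∞} (hf : ∀ n, Measurable (f n)) (hφ : ∀ n a, φ a ≤ f n a)
    (hlim : Tendsto (fun n => ∫⁻ a, f n a ∂μ) atTop (𝓝 0)) : ∀ᵐ a ∂μ, φ a = 0 := by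
  have hinf : ∫⁻ a, ⨅ n, f n a ∂μ = 0 :=
    le_antisymm (ge_of_tendsto' hlim fun n => lintegral_mono fun a => iInf_le _ n) zero_le
  filter_upwards [(lintegral_eq_zero_iff (Measurable.iInf hf)).1 hinf] with a ha
  exact le_antisymm ((le_iInf fun n => hφ n a).trans_eq ha) zero_le

lemma tendsto_lintegral_exp_neg_mul {α : Type*} [MeasurableSpace α] {μ : Measure α}
    [IsFiniteMeasure μ] {c : ℕ → α → ℝ} (hc : ∀ n, Measurable (c n)) (hc0 : ∀ n a, 0 ≤ c n a)
    {u : ℝ} (hu : 0 < u) (hlim : ∀ᵐ a ∂μ, Tendsto (fun n => c n a) atTop atTop) :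
    Tendsto (fun n => ∫⁻ a, ENNReal.ofReal (Real.exp (-u * c n a)) ∂μ) atTop (𝓝 0) := by
  have h := tendsto_lintegral_of_dominated_convergence (μ := μ) (f := 0) (fun _ => 1)
    (fun n => ENNReal.measurable_ofReal.comp (Real.measurable_exp.comp ((hc n).const_mul (-u))))
    (fun n => ae_of_all _ fun a => ENNReal.ofReal_le_one.2
      (Real.exp_le_one_iff.2 (by nlinarith [hc0 n a])))
    (by simp [measure_ne_top])
    (hlim.mono fun a ha => by
      simpa using ENNReal.tendsto_ofReal
        (Real.tendsto_exp_atBot.comp (ha.const_mul_atTop_of_neg (neg_neg_of_pos hu))))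
  simpa using h

variable {E : Type*} [Countable E] [DecidableEq E] [MeasurableSpace E]
  [MeasurableSingletonClass E] {W : Type*} [MeasurableSpace W]

-- `I` is not assumed measurable, so the annealed avoidance probability is bounded by
-- measurable hulls of the events `{w | I w ∩ C = ∅}`.
lemma exists_measurable_ge_measure_avoid (μ : Measure (ℕ → E)) (PI : Measure W)
    (I : W → Set E) (Φ : Finset E → ℝ≥0∞) (hI : ∀ C : Finset E, PI {w | ∀ x ∈ C, x ∉ I w} = Φ C)
    (n : ℕ) :
    ∃ f : W → ℝ≥0∞, Measurable f ∧ (∀ w, μ {ω | ∀ k, ω k ∉ I w} ≤ f w) ∧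
      ∫⁻ w, f w ∂PI = ∫⁻ ω, Φ (pathRange ω n) ∂μ := by
  set A : (Fin (n + 1) → E) → Set W := fun v => {w | ∀ x ∈ Finset.univ.image v, x ∉ I w}
  have hA : ∀ v, Measurable ((toMeasurable PI (A v)).indicator (1 : W → ℝ≥0∞)) :=
    fun v => measurable_one.indicator (measurableSet_toMeasurable _ _)
  refine ⟨fun w => ∑' v, μ (pathPrefix n ⁻¹' {v}) * (toMeasurable PI (A v)).indicator 1 w,
    Measurable.tsum fun v => (hA v).const_mul _, fun w => ?_, ?_⟩
  · calc μ {ω | ∀ k, ω k ∉ I w} ≤ μ (pathPrefix n ⁻¹' {v | w ∈ A v}) :=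
          measure_mono fun ω hω => by simpa [A, pathPrefix] using fun i : Fin (n + 1) => hω i
      _ = _ := measure_preimage_eq_tsum μ (measurable_pathPrefix n) _
      _ ≤ _ := ENNReal.tsum_le_tsum fun v => by
          by_cases hv : w ∈ A v
          · simp [hv, subset_toMeasurable PI (A v) hv]
          · simp [hv]
  · rw [lintegral_tsum fun v => ((hA v).const_mul _).aemeasurable]
    simp_rw [lintegral_const_mul _ (hA _), lintegral_indicator_one (measurableSet_toMeasurable _ _),
      measure_toMeasurable, A, hI, ← image_pathPrefix,
      lintegral_comp_eq_tsum μ (measurable_pathPrefix n) (fun v => Φ (Finset.univ.image v)),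
      mul_comm]

end Annealed

theorem stmt_5_general {E : Type*} [Countable E] [DecidableEq E]
    [MeasurableSpace E] [MeasurableSingletonClass E]
    (lam : E → ℝ) (hlam : ∀ x, 0 < lam x)
    (P : E → Measure (ℕ → E)) (hprob : ∀ x, IsProbabilityMeasure (P x))
    (p : E → E → ℝ≥0∞)
    (hrev : ∀ x y, ENNReal.ofReal (lam x) * p x y = ENNReal.ofReal (lam y) * p y x)
    (hFDD : ∀ (x : E) (n : ℕ) (w : Fin (n + 1) → E),
      P x {ω | ∀ i : Fin (n + 1), ω i = w i} =
        (if w 0 = x then 1 else 0) * ∏ i : Fin n, p (w i.castSucc) (w i.succ))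
    (hfin : ∀ x y : E, (∑' k : ℕ, P x {ω | ω k = y}) < ⊤)
    (g : E → E → ℝ)
    (hg : ∀ x y, g x y = ((∑' k : ℕ, P x {ω | ω k = y}).toReal) / lam y)
    (hpos : ∀ x y, 0 < g x y)
    (g0 : ℝ) (hdiag : ∀ x, g x x ≤ g0)
    {W : Type*} [MeasurableSpace W] (PI : Measure W)
    (u : ℝ) (hu : 0 < u)
    (I : W → Set E)
    (hI : ∀ C : Finset E,
      PI {w | ∀ x ∈ C, x ∉ I w} = ENNReal.ofReal (Real.exp (-u * capacity g C))) :
    ∀ᵐ w ∂PI, ∀ x : E, P x {ω | ∃ k : ℕ, ω k ∈ I w} = 1 := by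
  have hsym := green_symm hFDD hlam hrev hg
  rw [ae_all_iff]
  intro x
  have hcap : ∀ᵐ ω ∂P x, Tendsto (fun n => capacity g (pathRange ω n)) atTop atTop := by
    filter_upwards [ae_exists_sum_green_lt hFDD hfin hlam hg x] with ω hω
    exact tendsto_capacity_pathRange hpos hsym hω hdiag
  have hexp := tendsto_lintegral_exp_neg_mul (μ := P x) (measurable_comp_pathRange _)
    (fun n ω => capacity_nonneg (fun a b => (hpos a b).le) _) hu hcap
  choose f hf hf_ge hf_int using exists_measurable_ge_measure_avoid (P x) PI I _ hI
  simp_rw [← hf_int] at hexp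
  filter_upwards [ae_eq_zero_of_le_of_tendsto_lintegral hf hf_ge hexp] with w hw
  have hmeas : MeasurableSet {ω : ℕ → E | ∀ k, ω k ∉ I w} := by
    simp_rw [Set.ofPred_forall]
    exact MeasurableSet.iInter fun k => (measurable_pi_apply k : Measurable fun ω : ℕ → E => ω k)
      (MeasurableSet.of_discrete (s := (I w)ᶜ))
  rw [← prob_compl_eq_one_iff hmeas] at hw
  simpa [Set.compl_ofPred] using hw

/-- If ℐ^u is the interlacement set at level u > 0 on a transient
weighted graph with Green function bounded on the diagonal, characterized by
P^I[ℐ^u ∩ C = ∅] = exp(-u·cap(C)) for finite C, then P^I-almost surely, for every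
x ∈ E, the random walk started at x hits ℐ^u with P_x-probability one. -/
theorem stmt_5 {E : Type*} [Countable E] [DecidableEq E]
    [MeasurableSpace E] [MeasurableSingletonClass E]
    (lam : E → ℝ) (hlam : ∀ x, 0 < lam x)
    (P : E → Measure (ℕ → E)) (hprob : ∀ x, IsProbabilityMeasure (P x))
    (p : E → E → ℝ≥0∞) (hp : ∀ x, ∑' y, p x y = 1)
    (hrev : ∀ x y, ENNReal.ofReal (lam x) * p x y = ENNReal.ofReal (lam y) * p y x)
    (hFDD : ∀ (x : E) (n : ℕ) (w : Fin (n + 1) → E),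
      P x {ω | ∀ i : Fin (n + 1), ω i = w i} =
        (if w 0 = x then 1 else 0) * ∏ i : Fin n, p (w i.castSucc) (w i.succ))
    (hfin : ∀ x y : E, (∑' k : ℕ, P x {ω | ω k = y}) < ⊤)
    (g : E → E → ℝ)
    (hg : ∀ x y, g x y = ((∑' k : ℕ, P x {ω | ω k = y}).toReal) / lam y)
    (hpos : ∀ x y, 0 < g x y)
    (g0 : ℝ) (hdiag : ∀ x, g x x ≤ g0)
    {W : Type*} [MeasurableSpace W] (PI : Measure W) [IsProbabilityMeasure PI]
    (u : ℝ) (hu : 0 < u)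
    (I : W → Set E)
    (hI : ∀ C : Finset E,
      PI {w | ∀ x ∈ C, x ∉ I w} = ENNReal.ofReal (Real.exp (-u * capacity g C))) :
    ∀ᵐ w ∂PI, ∀ x : E, P x {ω | ∃ k : ℕ, ω k ∈ I w} = 1 :=
  stmt_5_general lam hlam P hprob p hrev hFDD hfin g hg hpos g0 hdiag PI u hu I hI
end

section
/- Let r : ℝ → [0,1] be measurable with r = 0 on (−∞, h) and, ν-a.s. on [h,∞), r ≤ (dQ_{log d}) r (i.e. 0 ≤ r ≤ L_h r ν-a.s.). If λ_h = ‖L_h‖_{L²(ν)→L²(ν)} < 1, then r = 0 ν-a.s. -/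
open MeasureTheory ProbabilityTheory

/-! Let `R ∈ L²(ν)` be the class of `r`. Each map `y ↦ a / d + c y`, `c = √(1 - 1 / d²)`,
pushes the nondegenerate Gaussian `ν` to another nondegenerate Gaussian, hence to a measure `≪ ν`,
so `L_h R` is a.e. the function `a ↦ 1_{a ≥ h} d ∫ r(a / d + c y) dν(y)` and the hypothesis reads
`0 ≤ r ≤ L_h R` a.e. Therefore `‖R‖ ≤ ‖L_h R‖ ≤ λ_h ‖R‖`, and `λ_h < 1` forces `R = 0`. -/

theorem ContinuousLinearMap.eq_zero_of_norm_le_norm_apply {𝕜 E : Type*} [NontriviallyNormedField 𝕜]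
    [NormedAddCommGroup E] [NormedSpace 𝕜 E] {T : E →L[𝕜] E} (hT : ‖T‖ < 1) {x : E}
    (hx : ‖x‖ ≤ ‖T x‖) : x = 0 := by
  have : ‖x‖ ≤ ‖T‖ * ‖x‖ := hx.trans (T.le_opNorm x)
  exact norm_le_zero_iff.mp (by nlinarith [norm_nonneg x])

theorem MeasureTheory.MemLp.ae_eq_zero_of_norm_le_norm_apply {α 𝕜 E : Type*} [MeasurableSpace α]
    {μ : Measure α} [NontriviallyNormedField 𝕜] [NormedAddCommGroup E] [NormedSpace 𝕜 E]
    {p : ENNReal} [Fact (1 ≤ p)] {T : Lp E p μ →L[𝕜] Lp E p μ} (hT : ‖T‖ < 1) {r : α → E}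
    (hr : MemLp r p μ) (hdom : ∀ᵐ a ∂μ, ‖r a‖ ≤ ‖T (hr.toLp r) a‖) : r =ᵐ[μ] 0 := by
  have hR : hr.toLp r = 0 := by
    refine T.eq_zero_of_norm_le_norm_apply hT (Lp.norm_le_norm_of_ae_le ?_)
    filter_upwards [hr.coeFn_toLp, hdom] with a ha hle
    rwa [ha]
  have hcoe := hr.coeFn_toLp
  rw [hR] at hcoe
  exact hcoe.symm.trans (Lp.coeFn_zero _ _ _)

theorem ProbabilityTheory.gaussianReal_map_const_add_const_mul_absolutelyContinuous (μ b : ℝ) {c : ℝ}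
    (hc : c ≠ 0) {v : NNReal} (hv : v ≠ 0) :
    (gaussianReal μ v).map (fun y => b + c * y) ≪ gaussianReal μ v := by
  rw [show (fun y => b + c * y) = (b + ·) ∘ (c * ·) from rfl,
    ← Measure.map_map (measurable_const_add b) (measurable_const_mul c),
    gaussianReal_map_const_mul, gaussianReal_map_const_add]
  refine (gaussianReal_absolutelyContinuous _ (mul_ne_zero ?_ hv)).trans
    (gaussianReal_absolutelyContinuous' _ hv)
  exact fun h => hc (pow_eq_zero_iff two_ne_zero |>.mp (congrArg NNReal.toReal h))

theorem gaussianReal_map_ornsteinUhlenbeck_absolutelyContinuous {d : ℝ} (hd : 1 < d) (a : ℝ) :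
    (gaussianReal 0 (Real.toNNReal (d / (d ^ 2 - 1)))).map
      (fun y => a / d + Real.sqrt (1 - 1 / d ^ 2) * y) ≪
      gaussianReal 0 (Real.toNNReal (d / (d ^ 2 - 1))) := by
  refine gaussianReal_map_const_add_const_mul_absolutelyContinuous 0 (a / d) ?_ ?_
  · refine (Real.sqrt_pos.mpr (sub_pos.mpr ((div_lt_one (by positivity)).mpr ?_))).ne'
    nlinarith
  · rw [ne_eq, Real.toNNReal_eq_zero, not_le]
    exact div_pos (by positivity) (by nlinarith)

/-- If r : ℝ → [0,1] is measurable, vanishes on (-∞,h), and satisfies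
r ≤ L_h r ν-a.s. on [h,∞), where λ_h = ‖L_h‖ < 1 for L_h = π_h(dQ_{log d})π_h on
L²(ν), then r = 0 ν-a.s. -/
theorem stmt_14 (d : ℕ) (hd : 2 ≤ d)
    (ν : Measure ℝ) (hν : ν = gaussianReal 0 (Real.toNNReal ((d : ℝ) / ((d : ℝ) ^ 2 - 1))))
    (Q : Lp ℝ 2 ν →L[ℝ] Lp ℝ 2 ν)
    (hQ : ∀ f : Lp ℝ 2 ν, (Q f : ℝ → ℝ) =ᵐ[ν]
      fun a => ∫ y, (f : ℝ → ℝ) (a / d + Real.sqrt (1 - 1 / (d : ℝ) ^ 2) * y) ∂ν)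
    (h : ℝ) (Ph : Lp ℝ 2 ν →L[ℝ] Lp ℝ 2 ν)
    (hPh : ∀ f : Lp ℝ 2 ν, (Ph f : ℝ → ℝ) =ᵐ[ν]
      fun a => if h ≤ a then (f : ℝ → ℝ) a else 0)
    (Lh : Lp ℝ 2 ν →L[ℝ] Lp ℝ 2 ν) (hLh : Lh = Ph ∘L ((d : ℝ) • Q) ∘L Ph)
    (hnorm : ‖Lh‖ < 1)
    (r : ℝ → ℝ) (hrm : Measurable r)
    (hr01 : ∀ a, 0 ≤ r a ∧ r a ≤ 1)
    (hrneg : ∀ a, a < h → r a = 0)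
    (hrineq : ∀ᵐ a ∂ν, h ≤ a →
      r a ≤ (d : ℝ) * ∫ y, r (a / d + Real.sqrt (1 - 1 / (d : ℝ) ^ 2) * y) ∂ν) :
    ∀ᵐ a ∂ν, r a = 0 := by
  set c := Real.sqrt (1 - 1 / (d : ℝ) ^ 2)
  have hac : ∀ a : ℝ, ν.map (fun y => a / d + c * y) ≪ ν := fun a => hν ▸
    gaussianReal_map_ornsteinUhlenbeck_absolutelyContinuous (by exact_mod_cast hd) a
  have : IsProbabilityMeasure ν := hν ▸ inferInstance
  have hmem : MemLp r 2 ν := MemLp.of_bound hrm.aestronglyMeasurable 1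
    (ae_of_all _ fun a => by rw [Real.norm_eq_abs, abs_of_nonneg (hr01 a).1]; exact (hr01 a).2)
  set R := hmem.toLp r
  have hPhR : (Ph R : ℝ → ℝ) =ᵐ[ν] r := by
    filter_upwards [hPh R, hmem.coeFn_toLp] with a hPa hRa
    split_ifs at hPa with ha
    · rw [hPa, hRa]
    · rw [hPa, hrneg a (not_le.mp ha)]
  have hQPhR : ∀ᵐ a ∂ν, (Q (Ph R) : ℝ → ℝ) a = ∫ y, r (a / d + c * y) ∂ν := by
    filter_upwards [hQ (Ph R)] with a hQa
    rw [hQa]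
    exact integral_congr_ae (ae_eq_comp' (by fun_prop) hPhR (hac a))
  refine hmem.ae_eq_zero_of_norm_le_norm_apply hnorm ?_
  filter_upwards [hPh ((d : ℝ) • Q (Ph R)), Lp.coeFn_smul (d : ℝ) (Q (Ph R)), hQPhR, hrineq]
    with a hPa hsa hQa hle
  rw [hLh, ContinuousLinearMap.comp_apply, ContinuousLinearMap.comp_apply, smul_apply, hPa]
  split_ifs with ha
  · rw [hsa, Pi.smul_apply, hQa, smul_eq_mul, Real.norm_eq_abs, Real.norm_eq_abs,
      abs_of_nonneg (hr01 a).1]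
    exact (hle ha).trans (le_abs_self _)
  · simp [hrneg a (not_le.mp ha)]
end

section
/- For all h ∈ ℝ and d ≥ 2, λ_h > d·Φ̄(h(d−1)/√d), where Φ̄(a) = (1/√(2π))∫_a^∞ e^{−t²/2} dt and λ_h = ‖π_h(dQ_{log d})π_h‖_{L²(ν)→L²(ν)} with ν = N(0, d/(d²−1)). In particular λ_0 > d/2. -/
/-!
Test the variational characterization of the norm of `T = P_h (d Q) P_h` against the
indicator `g` of `(h, ∞)`. Pushing `ν = N(0, d/(d²-1))` forward along `y ↦ a/d + s y`,
`s² = 1 - 1/d²`, gives `N(a/d, 1/d)`, so `(Q g)(a) = P[a/d + ξ > h]` with `ξ ~ N(0, 1/d)`.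
This is strictly increasing in `a`, and at `a = h` it equals `Φ̄(h(d-1)/√d)`. Hence
`⟪g, T g⟫ = d ∫_{a > h} Q g dν > d Φ̄(h(d-1)/√d) ‖g‖²`, while `⟪g, T g⟫ ≤ ‖T‖ ‖g‖²`.
-/

open MeasureTheory ProbabilityTheory Set
open scoped NNReal ENNReal RealInnerProductSpace

lemma lt_opNorm_of_mul_norm_sq_lt_inner {E : Type*} [NormedAddCommGroup E]
    [InnerProductSpace ℝ E] (T : E →L[ℝ] E) {c : ℝ} {g : E} (h : c * ‖g‖ ^ 2 < ⟪g, T g⟫) :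
    c < ‖T‖ := by
  have hle : ⟪g, T g⟫ ≤ ‖T‖ * ‖g‖ ^ 2 :=
    calc ⟪g, T g⟫ ≤ ‖g‖ * ‖T g‖ := real_inner_le_norm _ _
      _ ≤ ‖g‖ * (‖T‖ * ‖g‖) := by gcongr; exact T.le_opNorm g
      _ = ‖T‖ * ‖g‖ ^ 2 := by ring
  exact lt_of_mul_lt_mul_right (h.trans_le hle) (sq_nonneg _)

lemma mul_measureReal_lt_setIntegral {α : Type*} [MeasurableSpace α] {μ : Measure α}
    {s : Set α} {f : α → ℝ} {c : ℝ} (hμs : μ s ≠ 0) (hμs' : μ s ≠ ∞) (hf : IntegrableOn f s μ)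
    (hlt : ∀ᵐ x ∂μ.restrict s, c < f x) : c * μ.real s < ∫ x in s, f x ∂μ := by
  have hpos : 0 < ∫ x in s, (f x - c) ∂μ := by
    refine (integral_pos_iff_support_of_nonneg_ae (hlt.mono fun x hx => (sub_pos.2 hx).le)
      (hf.sub (integrableOn_const hμs'))).2 (pos_iff_ne_zero.2 fun h0 => hμs ?_)
    have hfalse : ∀ᵐ x ∂μ.restrict s, False := by
      filter_upwards [hlt, measure_eq_zero_iff_ae_notMem.1 h0] with x hx hx0
      exact hx0 (sub_pos.2 hx).ne'
    rw [← Measure.restrict_eq_zero]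
    exact ae_eq_bot.1 (Filter.eventually_false_iff_eq_bot.1 hfalse)
  rw [integral_sub hf (integrableOn_const hμs'), setIntegral_const, smul_eq_mul] at hpos
  linarith

lemma measure_Ioi_strictAnti {μ : Measure ℝ} [IsFiniteMeasure μ] (hμ : volume ≪ μ) :
    StrictAnti fun x => μ (Ioi x) := by
  intro x y hxy
  have hne : μ (Ioc x y) ≠ 0 := fun h0 => hxy.not_ge (by simpa using hμ h0)
  show μ (Ioi y) < μ (Ioi x)
  rw [← Ioc_union_Ioi_eq_Ioi hxy.le, measure_union Ioc_disjoint_Ioi_same measurableSet_Ioi,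
    add_comm]
  exact ENNReal.lt_add_right (measure_ne_top _ _) hne

lemma gaussianReal_map_const_add_mul (m : ℝ) (v : ℝ≥0) (a s : ℝ) :
    (gaussianReal m v).map (fun y => a + s * y)
      = gaussianReal (s * m + a) (.mk (s ^ 2) (sq_nonneg s) * v) := by
  rw [show (fun y => a + s * y) = (a + ·) ∘ (s * ·) from rfl,
    ← Measure.map_map (measurable_const_add a) (measurable_const_mul s),
    gaussianReal_map_const_mul, gaussianReal_map_const_add]

lemma gaussianReal_Ioi_eq_gaussianReal_zero_one (m : ℝ) {v : ℝ≥0} (hv : v ≠ 0) (c : ℝ) :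
    gaussianReal m v (Ioi c) = gaussianReal 0 1 (Ioi ((c - m) / √v)) := by
  have hσ : 0 < √(v : ℝ) := Real.sqrt_pos.2 (NNReal.coe_pos.2 (pos_iff_ne_zero.2 hv))
  have hstd : gaussianReal m v = (gaussianReal 0 1).map (fun x => m + √v * x) := by
    rw [gaussianReal_map_const_add_mul]
    congr 1
    · ring
    · exact NNReal.eq (by simp [Real.sq_sqrt v.coe_nonneg])
  rw [hstd, Measure.map_apply (by fun_prop) measurableSet_Ioi]
  congr 1
  ext x
  simp [div_lt_iff₀ hσ, sub_lt_iff_lt_add', mul_comm]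

lemma measureReal_gaussianReal_Ioi_strictMono {v : ℝ≥0} (hv : v ≠ 0) (c : ℝ) :
    StrictMono fun m => (gaussianReal m v).real (Ioi c) := by
  intro m m' hm
  have hσ : 0 < √(v : ℝ) := Real.sqrt_pos.2 (NNReal.coe_pos.2 (pos_iff_ne_zero.2 hv))
  simp only [measureReal_def, gaussianReal_Ioi_eq_gaussianReal_zero_one _ hv]
  exact (ENNReal.toReal_lt_toReal (measure_ne_top _ _) (measure_ne_top _ _)).2 <|
    measure_Ioi_strictAnti (gaussianReal_absolutelyContinuous' 0 one_ne_zero) (by gcongr)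

lemma measureReal_gaussianReal_zero_one_Ioi (c : ℝ) :
    (gaussianReal 0 1).real (Ioi c)
      = (√(2 * Real.pi))⁻¹ * ∫ t in Ioi c, Real.exp (-t ^ 2 / 2) := by
  rw [measureReal_def, gaussianReal_apply_eq_integral 0 one_ne_zero,
    ENNReal.toReal_ofReal (integral_nonneg fun t => gaussianPDFReal_nonneg _ _ _),
    ← integral_const_mul]
  refine setIntegral_congr_fun measurableSet_Ioi fun t _ => ?_
  simp [gaussianPDFReal]

lemma measureReal_gaussianReal_zero_one_Ioi_zero : (gaussianReal 0 1).real (Ioi 0) = 1 / 2 := by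
  have hexp : ∀ t : ℝ, -t ^ 2 / 2 = -(1 / 2) * t ^ 2 := fun t => by ring
  rw [measureReal_gaussianReal_zero_one_Ioi]
  simp_rw [hexp]
  rw [integral_gaussian_Ioi, show Real.pi / (1 / 2) = 2 * Real.pi by ring]
  field_simp

section Compression

variable {w v : ℝ≥0} {s d : ℝ}

lemma integral_indicatorConstLp_comp_const_add_mul (hv : v ≠ 0) (hsv : s ^ 2 * w = v)
    {t : Set ℝ} (ht : MeasurableSet t) (a : ℝ) :
    ∫ y, (indicatorConstLp 2 ht (measure_ne_top (gaussianReal 0 w) t) (1 : ℝ) : ℝ → ℝ)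
        (a + s * y) ∂gaussianReal 0 w = (gaussianReal a v).real t := by
  have hw : w ≠ 0 := fun hw0 => hv (NNReal.eq (by simp [← hsv, hw0]))
  set φ : ℝ → ℝ := fun y => a + s * y
  have hφ : Measurable φ := by fun_prop
  have hmap : (gaussianReal 0 w).map φ = gaussianReal a v := by
    rw [gaussianReal_map_const_add_mul, mul_zero, zero_add]
    exact congrArg _ (NNReal.eq hsv)
  have hac : (gaussianReal 0 w).map φ ≪ gaussianReal 0 w := by
    rw [hmap]
    exact (gaussianReal_absolutelyContinuous a hv).trans (gaussianReal_absolutelyContinuous' 0 hw)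
  calc _ = ∫ y, t.indicator (1 : ℝ → ℝ) (φ y) ∂gaussianReal 0 w :=
        integral_congr_ae (ae_eq_comp hφ.aemeasurable (hac.ae_eq indicatorConstLp_coeFn))
    _ = ∫ x, t.indicator (1 : ℝ → ℝ) x ∂(gaussianReal 0 w).map φ :=
        (integral_map hφ.aemeasurable (aestronglyMeasurable_const.indicator ht)).symm
    _ = _ := by rw [integral_indicator_one ht, hmap]

theorem mul_measureReal_gaussianReal_Ioi_lt_opNorm (hv : v ≠ 0) (hsv : s ^ 2 * w = v)
    (hd : 0 < d) (Q : Lp ℝ 2 (gaussianReal 0 w) →L[ℝ] Lp ℝ 2 (gaussianReal 0 w))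
    (hQ : ∀ f : Lp ℝ 2 (gaussianReal 0 w), (Q f : ℝ → ℝ) =ᵐ[gaussianReal 0 w]
      fun a => ∫ y, (f : ℝ → ℝ) (a / d + s * y) ∂gaussianReal 0 w)
    (P : Lp ℝ 2 (gaussianReal 0 w) →L[ℝ] Lp ℝ 2 (gaussianReal 0 w)) (h : ℝ)
    (hP : ∀ f : Lp ℝ 2 (gaussianReal 0 w), (P f : ℝ → ℝ) =ᵐ[gaussianReal 0 w]
      fun a => if h ≤ a then (f : ℝ → ℝ) a else 0) :
    d * (gaussianReal (h / d) v).real (Ioi h) < ‖P ∘L (d • Q) ∘L P‖ := by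
  have hw : w ≠ 0 := fun hw0 => hv (NNReal.eq (by simp [← hsv, hw0]))
  set g := indicatorConstLp 2 (measurableSet_Ioi (a := h)) (measure_ne_top (gaussianReal 0 w) _)
    (1 : ℝ)
  have hPg : P g = g := Lp.ext <| by
    filter_upwards [hP g, (indicatorConstLp_coeFn_notMem :
      ∀ᵐ a ∂gaussianReal 0 w, a ∉ Ioi h → g a = 0)] with a hPa hga
    rw [hPa]
    split_ifs with hha
    · rfl
    · exact (hga fun ha => hha ha.le).symm
  have hTg : ∀ᵐ a ∂(gaussianReal 0 w).restrict (Ioi h),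
      ((P ∘L (d • Q) ∘L P) g : ℝ → ℝ) a = d * (gaussianReal (a / d) v).real (Ioi h) := by
    rw [ae_restrict_iff' measurableSet_Ioi]
    filter_upwards [hP ((d • Q) g), Lp.coeFn_smul d (Q g), hQ g] with a hPa hsmul hQa ha
    rw [ContinuousLinearMap.comp_apply, ContinuousLinearMap.comp_apply, hPg, hPa,
      if_pos ha.le, smul_apply, hsmul, Pi.smul_apply, smul_eq_mul, hQa,
      integral_indicatorConstLp_comp_const_add_mul hv hsv]
  have hIoi : gaussianReal 0 w (Ioi h) ≠ 0 := fun h0 => by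
    simpa using gaussianReal_absolutelyContinuous' 0 hw h0
  refine lt_opNorm_of_mul_norm_sq_lt_inner (g := g) _ ?_
  rw [← real_inner_self_eq_norm_sq, L2.real_inner_indicatorConstLp_one_indicatorConstLp_one,
    inter_self, L2.inner_indicatorConstLp_one]
  refine mul_measureReal_lt_setIntegral hIoi (measure_ne_top _ _)
    (integrableOn_Lp_of_measure_ne_top _ one_le_two (measure_ne_top _ _)) ?_
  filter_upwards [hTg, ae_restrict_mem measurableSet_Ioi] with a hTa ha
  rw [hTa]
  exact mul_lt_mul_of_pos_left
    (measureReal_gaussianReal_Ioi_strictMono hv h (div_lt_div_of_pos_right ha hd)) hd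

end Compression

lemma sqrt_one_sub_one_div_sq_sq_mul_div {d : ℝ} (hd : 1 < d) :
    √(1 - 1 / d ^ 2) ^ 2 * (d / (d ^ 2 - 1)) = d⁻¹ := by
  have hd2 : 1 < d ^ 2 := by nlinarith
  rw [Real.sq_sqrt (sub_nonneg.2 (div_le_one_of_le₀ hd2.le (by positivity)))]
  field_simp [(sub_pos.2 hd2).ne']

lemma sub_div_div_sqrt_inv (h : ℝ) {d : ℝ} (hd : 0 < d) :
    (h - h / d) / √d⁻¹ = h * (d - 1) / √d := by
  rw [Real.sqrt_inv, div_inv_eq_mul, eq_div_iff (Real.sqrt_pos.2 hd).ne', mul_assoc,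
    Real.mul_self_sqrt hd.le]
  field_simp

/-- For all h ∈ ℝ and d ≥ 2, λ_h > d·Φ̄(h(d-1)/√d), where Φ̄ is the
standard Gaussian tail and λ_h = ‖π_h(dQ_{log d})π_h‖ on L²(ν),
ν = N(0, d/(d²-1)); in particular λ_0 > d/2. -/
theorem stmt_16 (d : ℕ) (hd : 2 ≤ d)
    (ν : Measure ℝ) (hν : ν = gaussianReal 0 (Real.toNNReal ((d : ℝ) / ((d : ℝ) ^ 2 - 1))))
    (Q : Lp ℝ 2 ν →L[ℝ] Lp ℝ 2 ν)
    (hQ : ∀ f : Lp ℝ 2 ν, (Q f : ℝ → ℝ) =ᵐ[ν]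
      fun a => ∫ y, (f : ℝ → ℝ) (a / d + Real.sqrt (1 - 1 / (d : ℝ) ^ 2) * y) ∂ν)
    (Ph : ℝ → (Lp ℝ 2 ν →L[ℝ] Lp ℝ 2 ν))
    (hPh : ∀ (h : ℝ) (f : Lp ℝ 2 ν), (Ph h f : ℝ → ℝ) =ᵐ[ν]
      fun a => if h ≤ a then (f : ℝ → ℝ) a else 0)
    (lam : ℝ → ℝ) (hlam : ∀ h : ℝ, lam h = ‖Ph h ∘L ((d : ℝ) • Q) ∘L Ph h‖)
    (Phibar : ℝ → ℝ)
    (hPhibar : ∀ a : ℝ, Phibar a =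
      (Real.sqrt (2 * Real.pi))⁻¹ * ∫ t in Set.Ioi a, Real.exp (-t ^ 2 / 2)) :
    (∀ h : ℝ, (d : ℝ) * Phibar (h * ((d : ℝ) - 1) / Real.sqrt d) < lam h) ∧
    (d : ℝ) / 2 < lam 0 := by
  subst hν
  have hd1 : (1 : ℝ) < d := by norm_cast
  have hv : (d : ℝ≥0)⁻¹ ≠ 0 := inv_ne_zero (by positivity)
  have hsv : √(1 - 1 / (d : ℝ) ^ 2) ^ 2 * ((d : ℝ) / ((d : ℝ) ^ 2 - 1)).toNNReal
      = ((d : ℝ≥0)⁻¹ : ℝ≥0) := by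
    rw [Real.coe_toNNReal _ (div_pos (by positivity) (by nlinarith)).le,
      sqrt_one_sub_one_div_sq_sq_mul_div hd1]
    push_cast
    rfl
  have htail (h : ℝ) :
      (gaussianReal (h / d) (d : ℝ≥0)⁻¹).real (Ioi h) = Phibar (h * (d - 1) / √d) := by
    rw [hPhibar, ← measureReal_gaussianReal_zero_one_Ioi, measureReal_def, measureReal_def,
      gaussianReal_Ioi_eq_gaussianReal_zero_one _ hv]
    push_cast
    rw [sub_div_div_sqrt_inv _ (by positivity)]
  have hmain (h : ℝ) : (d : ℝ) * Phibar (h * ((d : ℝ) - 1) / √d) < lam h := by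
    rw [hlam, ← htail]
    exact mul_measureReal_gaussianReal_Ioi_lt_opNorm hv hsv (by positivity) Q hQ (Ph h) h (hPh h)
  refine ⟨hmain, ?_⟩
  have := hmain 0
  rwa [zero_mul, zero_div, hPhibar, ← measureReal_gaussianReal_zero_one_Ioi,
    measureReal_gaussianReal_zero_one_Ioi_zero, ← div_eq_mul_one_div] at this
end
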